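/- For 0 ≤ s ≤ 1 let J_s = s |Φ_00⟩⟨Φ_00| + ((1−s)/4) I₄ be the Choi state of the qubit depolarising channel D^pol_s. Then for 0 ≤ s, s' ≤ 1: J_{s'} lies in the convex hull of { (U ⊗ V) J_s (U ⊗ V)† : U, V ∈ U(2) } (an allowed operation maps D^pol_s to D^pol_{s'}) if and only if s' ≤ s. -/

import Mathlib

open Matrix Kronecker

noncomputable section

/-- The qubit discrete Weyl operators `W_nm = Σ_c (−1)^{mc} |n+c⟩⟨c|`. -/
def Wq (n m : ZMod 2) : Matrix (ZMod 2) (ZMod 2) ℂ :=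
  Matrix.of fun r c => if r = n + c then (-1 : ℂ) ^ (m.val * c.val) else 0

/-- The qubit Bell basis vector `|Φ_nm⟩ = (I ⊗ W_nm)|Φ_00⟩`. -/
def bell (n m : ZMod 2) : ZMod 2 × ZMod 2 → ℂ :=
  fun p => ((Real.sqrt 2 : ℝ) : ℂ)⁻¹ * Wq n m p.2 p.1

/-- The Bell projector `|Φ_nm⟩⟨Φ_nm|`. -/
def bellProj (n m : ZMod 2) : Matrix (ZMod 2 × ZMod 2) (ZMod 2 × ZMod 2) ℂ :=
  Matrix.of fun p q => bell n m p * (starRingEnd ℂ) (bell n m q)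

/-- The set `{ (U ⊗ V) J (U ⊗ V)† : U, V ∈ U(2) }`. -/
def allowedSet (J : Matrix (ZMod 2 × ZMod 2) (ZMod 2 × ZMod 2) ℂ) :
    Set (Matrix (ZMod 2 × ZMod 2) (ZMod 2 × ZMod 2) ℂ) :=
  { K | ∃ U ∈ Matrix.unitaryGroup (ZMod 2) ℂ, ∃ V ∈ Matrix.unitaryGroup (ZMod 2) ℂ,
      K = (U ⊗ₖ V) * J * (U ⊗ₖ V)ᴴ }

/-- The Choi state `J_s = s |Φ_00⟩⟨Φ_00| + ((1−s)/4) I₄` of the qubit depolarising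
channel `D^pol_s`. -/
def Jdep (s : ℝ) : Matrix (ZMod 2 × ZMod 2) (ZMod 2 × ZMod 2) ℂ :=
  s • bellProj 0 0 + ((1 - s) / 4) • (1 : Matrix (ZMod 2 × ZMod 2) (ZMod 2 × ZMod 2) ℂ)

/-- The Choi state `K_q = ((1+q)/2)|Φ_00⟩⟨Φ_00| + ((1−q)/2)|Φ_01⟩⟨Φ_01|` of the qubit
dephasing channel `D^ph_q`. -/
def Kdeph (q : ℝ) : Matrix (ZMod 2 × ZMod 2) (ZMod 2 × ZMod 2) ℂ :=
  ((1 + q) / 2) • bellProj 0 0 + ((1 - q) / 2) • bellProj 0 1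

/-!
Every unitary conjugate `M J_s Mᴴ` lies below `((1 + 3s)/4) • 1` in the Loewner order, because
`|Φ_00⟩⟨Φ_00|` is one of four positive Bell projectors summing to `1`. The matrices below a
fixed one form a convex set, so the bound passes to the convex hull; testing it on `Φ_00`, an
eigenvector of `J_{s'}` with eigenvalue `(1 + 3s')/4`, gives `s' ≤ s`.
Conversely, averaging the conjugates of `J_s` by the four `1 ⊗ W_nm` gives `1/4 = J_0`, and
`s ↦ J_s` is affine, so `J_{s'}` lies on the segment from `J_0` to `J_s` when `0 ≤ s' ≤ s`.
-/

open scoped MatrixOrder ComplexOrder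

lemma ZMod.two_cases (a : ZMod 2) : a = 0 ∨ a = 1 := by revert a; decide

lemma ZMod.sum_univ_two {M : Type*} [AddCommMonoid M] (f : ZMod 2 → M) : ∑ x, f x = f 0 + f 1 :=
  Fin.sum_univ_two f

lemma inv_sqrt_two_mul_self : ((Real.sqrt 2 : ℝ) : ℂ)⁻¹ * ((Real.sqrt 2 : ℝ) : ℂ)⁻¹ = 2⁻¹ := by
  rw [← mul_inv, ← Complex.ofReal_mul, Real.mul_self_sqrt zero_le_two]; norm_num

lemma Wq_mem_unitaryGroup (n m : ZMod 2) : Wq n m ∈ unitaryGroup (ZMod 2) ℂ := by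
  rw [mem_unitaryGroup_iff']
  ext i j
  rcases ZMod.two_cases n with rfl | rfl <;> rcases ZMod.two_cases m with rfl | rfl <;>
    rcases ZMod.two_cases i with rfl | rfl <;> rcases ZMod.two_cases j with rfl | rfl <;>
    simp [Wq, mul_apply, ZMod.val_one, show (1 : ZMod 2) + 1 = 0 from rfl]

lemma bellProj_eq_vecMulVec (n m : ZMod 2) :
    bellProj n m = vecMulVec (bell n m) (star (bell n m)) :=
  rfl

lemma star_bell_dotProduct_bell : star (bell 0 0) ⬝ᵥ bell 0 0 = 1 := by
  simp [dotProduct, Fintype.sum_prod_type, bell, Wq, inv_sqrt_two_mul_self]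

lemma bellProj_mulVec_bell : bellProj 0 0 *ᵥ bell 0 0 = bell 0 0 := by
  rw [bellProj_eq_vecMulVec, vecMulVec_mulVec, star_bell_dotProduct_bell, MulOpposite.op_one,
    one_smul]

lemma sum_bellProj : ∑ p : ZMod 2 × ZMod 2, bellProj p.1 p.2 = 1 := by
  ext ⟨a, b⟩ ⟨a', b'⟩
  rcases ZMod.two_cases a with rfl | rfl <;> rcases ZMod.two_cases b with rfl | rfl <;>
    rcases ZMod.two_cases a' with rfl | rfl <;> rcases ZMod.two_cases b' with rfl | rfl <;>
    simp [Matrix.sum_apply, Fintype.sum_prod_type, ZMod.sum_univ_two, bellProj, bell, Wq,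
      ZMod.val_one, inv_sqrt_two_mul_self, show (1 : ZMod 2) + 1 = 0 from rfl] <;> norm_num

lemma bellProj_le_one (n m : ZMod 2) : bellProj n m ≤ 1 := by
  have h0 : ∀ p ∈ (Finset.univ : Finset (ZMod 2 × ZMod 2)), 0 ≤ bellProj p.1 p.2 :=
    fun p _ => (posSemidef_vecMulVec_self_star _).nonneg
  have := Finset.single_le_sum h0 (Finset.mem_univ (n, m))
  rwa [sum_bellProj] at this

lemma one_kronecker_Wq_mulVec_bell (n m : ZMod 2) : (1 ⊗ₖ Wq n m) *ᵥ bell 0 0 = bell n m := by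
  have hW00 : Wq 0 0 = 1 := by ext i j; simp [Wq, one_apply]
  ext ⟨a, b⟩
  simp [mulVec, dotProduct, Fintype.sum_prod_type, bell, hW00, one_apply, mul_comm]

lemma Jdep_le {s : ℝ} (hs : 0 ≤ s) : Jdep s ≤ ((1 + 3 * s) / 4 : ℝ) • 1 :=
  calc Jdep s ≤ s • (1 : Matrix (ZMod 2 × ZMod 2) (ZMod 2 × ZMod 2) ℂ) + ((1 - s) / 4 : ℝ) • 1 :=
        add_le_add_left (smul_le_smul_of_nonneg_left (bellProj_le_one 0 0) hs) _
    _ = ((1 + 3 * s) / 4 : ℝ) • 1 := by module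

lemma allowedSet_subset_Iic_of_le {J : Matrix (ZMod 2 × ZMod 2) (ZMod 2 × ZMod 2) ℂ} {c : ℝ}
    (hJ : J ≤ c • 1) : allowedSet J ⊆ Set.Iic (c • 1) := by
  rintro _ ⟨U, hU, V, hV, rfl⟩
  have hUV := kronecker_mem_unitary hU hV
  have := star_right_conjugate_le_conjugate hJ (U ⊗ₖ V)
  rwa [star_eq_conjTranspose, Matrix.mul_smul, Matrix.smul_mul, mul_one,
    ← star_eq_conjTranspose, Unitary.mul_star_self_of_mem hUV] at this

lemma Jdep_mulVec_bell (t : ℝ) : Jdep t *ᵥ bell 0 0 = ((1 + 3 * t) / 4 : ℝ) • bell 0 0 := by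
  rw [Jdep, add_mulVec, smul_mulVec, smul_mulVec, bellProj_mulVec_bell, one_mulVec, ← add_smul]
  ring_nf

lemma le_of_Jdep_le {s s' : ℝ} (h : Jdep s' ≤ ((1 + 3 * s) / 4 : ℝ) • 1) : s' ≤ s := by
  have := (Matrix.le_iff.mp h).dotProduct_mulVec_nonneg (bell 0 0)
  rw [sub_mulVec, smul_mulVec, one_mulVec, Jdep_mulVec_bell, ← sub_smul, dotProduct_smul,
    star_bell_dotProduct_bell, Complex.real_smul, mul_one, Complex.zero_le_real] at this
  linarith

lemma conj_smul_add_smul_one {ι : Type*} [Fintype ι] [DecidableEq ι] {U : Matrix ι ι ℂ}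
    (hU : U ∈ unitaryGroup ι ℂ) (A : Matrix ι ι ℂ) (a b : ℝ) :
    U * (a • A + b • 1) * Uᴴ = a • (U * A * Uᴴ) + b • 1 := by
  rw [mul_add, add_mul, Matrix.mul_smul, Matrix.smul_mul, Matrix.mul_smul, Matrix.smul_mul, mul_one,
    ← star_eq_conjTranspose, Unitary.mul_star_self_of_mem hU]

lemma conj_Jdep (s : ℝ) (n m : ZMod 2) :
    (1 ⊗ₖ Wq n m) * Jdep s * (1 ⊗ₖ Wq n m)ᴴ = s • bellProj n m + ((1 - s) / 4) • 1 := by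
  rw [Jdep, conj_smul_add_smul_one (kronecker_mem_unitary (one_mem _) (Wq_mem_unitaryGroup n m)),
    bellProj_eq_vecMulVec, bellProj_eq_vecMulVec, mul_vecMulVec, vecMulVec_mul, ← star_mulVec,
    one_kronecker_Wq_mulVec_bell]

lemma sum_conj_Jdep (s : ℝ) :
    ∑ p : ZMod 2 × ZMod 2, (1 ⊗ₖ Wq p.1 p.2) * Jdep s * (1 ⊗ₖ Wq p.1 p.2)ᴴ = 1 := by
  simp only [conj_Jdep, Finset.sum_add_distrib, ← Finset.smul_sum, sum_bellProj, Finset.sum_const,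
    Finset.card_univ, Fintype.card_prod, ZMod.card]
  module

lemma Jdep_zero_mem_convexHull_allowedSet (s : ℝ) :
    Jdep 0 ∈ convexHull ℝ (allowedSet (Jdep s)) := by
  have hJ0 : Jdep 0 =
      ∑ p : ZMod 2 × ZMod 2, (1 / 4 : ℝ) • ((1 ⊗ₖ Wq p.1 p.2) * Jdep s * (1 ⊗ₖ Wq p.1 p.2)ᴴ) := by
    rw [← Finset.smul_sum, sum_conj_Jdep, Jdep]
    module
  rw [hJ0]
  exact (convex_convexHull ℝ _).sum_mem (fun _ _ => by norm_num) (by simp)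
    fun p _ => subset_convexHull ℝ _ ⟨1, one_mem _, Wq p.1 p.2, Wq_mem_unitaryGroup _ _, rfl⟩

lemma mem_allowedSet_self (J : Matrix (ZMod 2 × ZMod 2) (ZMod 2 × ZMod 2) ℂ) :
    J ∈ allowedSet J :=
  ⟨1, one_mem _, 1, one_mem _, by simp⟩

lemma Jdep_eq_lineMap (t : ℝ) : Jdep t = AffineMap.lineMap (Jdep 0) (Jdep 1) t := by
  rw [AffineMap.lineMap_apply_module]
  simp only [Jdep]
  match_scalars <;> ring

lemma Jdep_mem_segment {s s' : ℝ} (hs'0 : 0 ≤ s') (hle : s' ≤ s) :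
    Jdep s' ∈ segment ℝ (Jdep 0) (Jdep s) := by
  have hmem : s' ∈ segment ℝ 0 s := by rw [segment_eq_Icc (hs'0.trans hle)]; exact ⟨hs'0, hle⟩
  have := Set.mem_image_of_mem (AffineMap.lineMap (k := ℝ) (Jdep 0) (Jdep 1)) hmem
  rwa [image_segment, ← Jdep_eq_lineMap, ← Jdep_eq_lineMap, ← Jdep_eq_lineMap] at this

theorem depolarising_to_depolarising_general (s s' : ℝ)
    (hs0 : 0 ≤ s) (hs'0 : 0 ≤ s') :
    Jdep s' ∈ convexHull ℝ (allowedSet (Jdep s)) ↔ s' ≤ s := by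
  constructor
  · intro h
    exact le_of_Jdep_le
      (convexHull_min (allowedSet_subset_Iic_of_le (Jdep_le hs0)) (convex_Iic _) h)
  · intro h
    exact (convex_convexHull ℝ _).segment_subset (Jdep_zero_mem_convexHull_allowedSet s)
      (subset_convexHull ℝ _ (mem_allowedSet_self _)) (Jdep_mem_segment hs'0 h)

/-- An allowed operation maps the qubit depolarising channel `D^pol_s` to
`D^pol_{s'}` if and only if `s' ≤ s`. -/
theorem depolarising_to_depolarising (s s' : ℝ)
    (hs0 : 0 ≤ s) (hs1 : s ≤ 1) (hs'0 : 0 ≤ s') (hs'1 : s' ≤ 1) :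
    Jdep s' ∈ convexHull ℝ (allowedSet (Jdep s)) ↔ s' ≤ s :=
  depolarising_to_depolarising_general s s' hs0 hs'0

end
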